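/- arXiv:2311.11093 — 2 statements merged into one kernel-verified Lean document; each statement's English description precedes it below -/
import Mathlib

section
/- For any square matrix M and any p ≥ 1, the Schatten p-norm of the diagonal part of M is at most the Schatten p-norm of M, i.e. ‖M_d‖_p ≤ ‖M‖_p, where M_d agrees with M on the diagonal and is zero off the diagonal. -/
open scoped BigOperators

/-- Singular values of a real square matrix: square roots of the eigenvalues
of `Mᵀ * M` (which is Hermitian). -/
noncomputable def singVals {n : ℕ} (M : Matrix (Fin n) (Fin n) ℝ) : Fin n → ℝ :=
  fun i => Real.sqrt ((Matrix.isHermitian_conjTranspose_mul_self M).eigenvalues i)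

/-- Schatten `p`-norm `‖M‖_p = (∑ i, σ_i(M)^p)^(1/p)`. -/
noncomputable def schattenNorm {n : ℕ} (p : ℝ) (M : Matrix (Fin n) (Fin n) ℝ) : ℝ :=
  (∑ i, (singVals M i) ^ p) ^ (1 / p)

/-!
Write `M = V Σ Uᴴ`, where `U` is an orthogonal eigenbasis of `Mᴴ M`, `Σ = diag σ` holds the
singular values, and `V = M U Σ⁺` is a partial isometry. Then `M i i = ∑ k, σ k V i k U i k`,
so `|M i i| ≤ ∑ k, a i k σ k` with `a i k = |V i k| |U i k|`. Rows and columns of a partial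
isometry have norm at most one, so by Cauchy–Schwarz `a` is doubly substochastic, and Jensen's
inequality for `t ↦ t ^ p` gives `∑ i, |M i i| ^ p ≤ ∑ k, σ k ^ p`.
-/

open Matrix

lemma rpow_sum_mul_le_sum_mul_rpow {ι : Type*} [Fintype ι] {p : ℝ} (hp : 1 ≤ p)
    (c t : ι → ℝ) (hc : ∀ k, 0 ≤ c k) (hcs : ∑ k, c k ≤ 1) (ht : ∀ k, 0 ≤ t k) :
    (∑ k, c k * t k) ^ p ≤ ∑ k, c k * t k ^ p := by
  -- Jensen for the probability weights `c` extended by the defect `1 - ∑ c` placed at `0`.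
  have h := Real.rpow_arith_mean_le_arith_mean_rpow (Finset.univ : Finset (Option ι))
    (fun o => o.elim (1 - ∑ k, c k) c) (fun o => o.elim 0 t)
    (fun o _ => by cases o with
      | none => simpa using hcs
      | some k => exact hc k)
    (by simp [Fintype.sum_option])
    (fun o _ => by cases o with
      | none => exact le_rfl
      | some k => exact ht k) hp
  simpa [Fintype.sum_option, Real.zero_rpow (by positivity : p ≠ 0)] using h

lemma sum_rpow_sum_mul_le_sum_rpow {ι κ : Type*} [Fintype ι] [Fintype κ] {p : ℝ} (hp : 1 ≤ p)
    (a : ι → κ → ℝ) (ha : ∀ i k, 0 ≤ a i k) (hrow : ∀ i, ∑ k, a i k ≤ 1)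
    (hcol : ∀ k, ∑ i, a i k ≤ 1) (σ : κ → ℝ) (hσ : ∀ k, 0 ≤ σ k) :
    ∑ i, (∑ k, a i k * σ k) ^ p ≤ ∑ k, σ k ^ p :=
  calc ∑ i, (∑ k, a i k * σ k) ^ p
      ≤ ∑ i, ∑ k, a i k * σ k ^ p :=
        Finset.sum_le_sum fun i _ => rpow_sum_mul_le_sum_mul_rpow hp _ _ (ha i) (hrow i) hσ
    _ = ∑ k, (∑ i, a i k) * σ k ^ p := by
        rw [Finset.sum_comm]; simp only [Finset.sum_mul]
    _ ≤ ∑ k, σ k ^ p := Finset.sum_le_sum fun k _ =>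
        mul_le_of_le_one_left (Real.rpow_nonneg (hσ k) p) (hcol k)

lemma sum_abs_mul_abs_le_one {ι : Type*} [Fintype ι] (x y : ι → ℝ)
    (hx : ∑ i, x i ^ 2 ≤ 1) (hy : ∑ i, y i ^ 2 ≤ 1) : ∑ i, |x i| * |y i| ≤ 1 := by
  have hcs := Finset.sum_mul_sq_le_sq_mul_sq Finset.univ (fun i => |x i|) (fun i => |y i|)
  simp only [sq_abs] at hcs
  have hsq : (∑ i, |x i| * |y i|) ^ 2 ≤ 1 :=
    hcs.trans (mul_le_one₀ hx (Finset.sum_nonneg fun i _ => sq_nonneg _) hy)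
  exact (sq_le_one_iff₀ (Finset.sum_nonneg fun i _ => by positivity)).mp hsq

lemma sum_sq_row_le_one_of_mul_conjTranspose_mul_self {m n : Type*} [Fintype m] [Fintype n]
    {V : Matrix m n ℝ} (hV : V * Vᴴ * V = V) (i : m) : ∑ j, V i j ^ 2 ≤ 1 := by
  -- `P = V Vᴴ` is a symmetric idempotent, so `P i i = ∑ j, P i j ^ 2 ≥ P i i ^ 2`.
  set P := V * Vᴴ
  have hPii : P i i = ∑ j, V i j ^ 2 := by simp [P, mul_apply, sq]
  have hPP : P * P = P := by rw [← Matrix.mul_assoc, hV]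
  have hPsymm : ∀ j, P j i = P i j := fun j => by
    simp [P, mul_apply, mul_comm]
  have hsq : P i i ^ 2 ≤ P i i :=
    calc P i i ^ 2 ≤ ∑ j, P i j ^ 2 :=
          Finset.single_le_sum (f := fun j => P i j ^ 2) (fun j _ => sq_nonneg _)
            (Finset.mem_univ i)
      _ = P i i := by
          conv_rhs => rw [← hPP]
          simp [mul_apply, hPsymm, sq]
  have hP0 : 0 ≤ P i i := hPii ▸ Finset.sum_nonneg fun j _ => sq_nonneg (V i j)
  rw [← hPii]
  nlinarith

lemma sum_sq_col_le_one_of_mul_conjTranspose_mul_self {m n : Type*} [Fintype m] [Fintype n]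
    {V : Matrix m n ℝ} (hV : V * Vᴴ * V = V) (j : n) : ∑ i, V i j ^ 2 ≤ 1 := by
  have hVt : Vᴴ * Vᴴᴴ * Vᴴ = Vᴴ := by
    conv_rhs => rw [← hV]
    simp only [conjTranspose_mul, conjTranspose_conjTranspose, Matrix.mul_assoc]
  simpa using sum_sq_row_le_one_of_mul_conjTranspose_mul_self hVt j

lemma sum_abs_diag_rpow_le_of_mul_diagonal_mul {ι κ : Type*} [Fintype ι] [Fintype κ]
    [DecidableEq κ] {p : ℝ} (hp : 1 ≤ p) {V U : Matrix ι κ ℝ} (hV : V * Vᴴ * V = V)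
    (hU : U * Uᴴ * U = U) (σ : κ → ℝ) (hσ : ∀ k, 0 ≤ σ k) :
    ∑ i, |(V * diagonal σ * Uᴴ) i i| ^ p ≤ ∑ k, σ k ^ p := by
  set a : ι → κ → ℝ := fun i k => |V i k| * |U i k|
  have hdiag : ∀ i, |(V * diagonal σ * Uᴴ) i i| ≤ ∑ k, a i k * σ k := fun i => by
    rw [mul_apply]
    simp only [mul_diagonal, conjTranspose_apply, star_trivial]
    refine (Finset.abs_sum_le_sum_abs _ _).trans_eq (Finset.sum_congr rfl fun k _ => ?_)
    simp only [a, abs_mul, abs_of_nonneg (hσ k)]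
    ring
  calc ∑ i, |(V * diagonal σ * Uᴴ) i i| ^ p
      ≤ ∑ i, (∑ k, a i k * σ k) ^ p := Finset.sum_le_sum fun i _ =>
        Real.rpow_le_rpow (abs_nonneg _) (hdiag i) (by linarith)
    _ ≤ ∑ k, σ k ^ p :=
        sum_rpow_sum_mul_le_sum_rpow hp a (fun i k => by positivity)
          (fun i => sum_abs_mul_abs_le_one _ _
            (sum_sq_row_le_one_of_mul_conjTranspose_mul_self hV i)
            (sum_sq_row_le_one_of_mul_conjTranspose_mul_self hU i))
          (fun k => sum_abs_mul_abs_le_one _ _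
            (sum_sq_col_le_one_of_mul_conjTranspose_mul_self hV k)
            (sum_sq_col_le_one_of_mul_conjTranspose_mul_self hU k)) σ hσ

section PartialIsometry

variable {m κ : Type*} [Fintype m] [Fintype κ] [DecidableEq κ] {B : Matrix m κ ℝ} {σ : κ → ℝ}

-- With `0⁻¹ = 0`, `diagonal σ⁻¹` is the pseudo-inverse of `diagonal σ`.
lemma mul_diagonal_inv_isPartialIsometry (hB : Bᴴ * B = diagonal fun k => σ k ^ 2) :
    B * diagonal σ⁻¹ * (B * diagonal σ⁻¹)ᴴ * (B * diagonal σ⁻¹) = B * diagonal σ⁻¹ := by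
  have hσ : ∀ k, σ⁻¹ k * (σ⁻¹ k * σ k ^ 2 * σ⁻¹ k) = σ⁻¹ k := fun k => by
    rcases eq_or_ne (σ k) 0 with h | h
    · simp [h]
    · simp only [Pi.inv_apply]; field_simp
  calc B * diagonal σ⁻¹ * (B * diagonal σ⁻¹)ᴴ * (B * diagonal σ⁻¹)
      = B * (diagonal σ⁻¹ * (diagonal σ⁻¹ * (Bᴴ * B) * diagonal σ⁻¹)) := by
        simp only [conjTranspose_mul, diagonal_conjTranspose, star_trivial, Matrix.mul_assoc]
    _ = B * diagonal σ⁻¹ := by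
        rw [hB]; simp only [diagonal_mul_diagonal, hσ]

lemma mul_diagonal_inv_mul_diagonal (hB : Bᴴ * B = diagonal fun k => σ k ^ 2) :
    B * diagonal σ⁻¹ * diagonal σ = B := by
  ext i k
  simp only [mul_diagonal, Pi.inv_apply]
  rcases eq_or_ne (σ k) 0 with h | h
  · -- a zero singular value forces the whole column `k` of `B` to vanish
    have hcol : ∑ j, B j k * B j k = 0 := by
      simpa [mul_apply, h] using congrFun (congrFun hB k) k
    have := (Finset.sum_eq_zero_iff_of_nonneg fun j _ => mul_self_nonneg (B j k)).mp hcol i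
      (Finset.mem_univ i)
    simp [mul_self_eq_zero.mp this]
  · field_simp

end PartialIsometry

lemma exists_partialIsometry_mul_diagonal_singVals_mul {n : ℕ} (M : Matrix (Fin n) (Fin n) ℝ) :
    ∃ V U : Matrix (Fin n) (Fin n) ℝ, V * Vᴴ * V = V ∧ U * Uᴴ * U = U ∧
      M = V * diagonal (singVals M) * Uᴴ := by
  set hH := isHermitian_conjTranspose_mul_self M
  set U : Matrix (Fin n) (Fin n) ℝ := (hH.eigenvectorUnitary : Matrix (Fin n) (Fin n) ℝ)
  have hUUh : U * Uᴴ = 1 := mem_unitaryGroup_iff.mp hH.eigenvectorUnitary.2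
  have hB : (M * U)ᴴ * (M * U) = diagonal fun k => singVals M k ^ 2 := by
    have h := hH.conjStarAlgAut_star_eigenvectorUnitary
    rw [Unitary.conjStarAlgAut_star_apply] at h
    simp only [singVals, Real.sq_sqrt (eigenvalues_conjTranspose_mul_self_nonneg M _)]
    simp only [RCLike.ofReal_real_eq_id, Function.id_comp, star_eq_conjTranspose] at h
    simpa only [conjTranspose_mul, Matrix.mul_assoc] using h
  refine ⟨M * U * diagonal (singVals M)⁻¹, U, mul_diagonal_inv_isPartialIsometry hB,
    by rw [hUUh, Matrix.one_mul], ?_⟩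
  rw [mul_diagonal_inv_mul_diagonal hB, Matrix.mul_assoc, hUUh, Matrix.mul_one]

lemma IsHermitian.sum_comp_eigenvalues_of_eq_diagonal {ι : Type*} [Fintype ι] [DecidableEq ι]
    {A : Matrix ι ι ℝ} (hA : A.IsHermitian) {d : ι → ℝ} (hAd : A = diagonal d) (f : ℝ → ℝ) :
    ∑ i, f (hA.eigenvalues i) = ∑ i, f (d i) := by
  have hroots := hA.roots_charpoly_eq_eigenvalues
  rw [congrArg charpoly hAd, charpoly_diagonal, Polynomial.roots_prod _ _
    (Finset.prod_ne_zero_iff.mpr fun i _ => Polynomial.X_sub_C_ne_zero (d i))] at hroots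
  simp only [Polynomial.roots_X_sub_C, Multiset.bind_singleton, RCLike.ofReal_real_eq_id,
    Function.id_comp] at hroots
  simpa only [Finset.sum_eq_multiset_sum, Multiset.map_map, Function.comp_def] using
    congrArg (fun s => (s.map f).sum) hroots.symm

lemma sum_singVals_diagonal_rpow {n : ℕ} (d : Fin n → ℝ) (p : ℝ) :
    ∑ i, singVals (diagonal d) i ^ p = ∑ i, |d i| ^ p := by
  have hdd : (diagonal d)ᴴ * diagonal d = diagonal fun i => d i ^ 2 := by
    simp [diagonal_mul_diagonal, sq]
  simp only [singVals, IsHermitian.sum_comp_eigenvalues_of_eq_diagonal _ hdd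
    (fun x => Real.sqrt x ^ p), Real.sqrt_sq_eq_abs]

/-- For any square matrix `M` and any `p ≥ 1`, the Schatten `p`-norm of the diagonal
part of `M` is at most the Schatten `p`-norm of `M`. -/
theorem stmt_1 {n : ℕ} (M : Matrix (Fin n) (Fin n) ℝ) (p : ℝ) (hp : 1 ≤ p) :
    schattenNorm p (Matrix.diagonal (fun i => M i i)) ≤ schattenNorm p M := by
  obtain ⟨V, U, hV, hU, hM⟩ := exists_partialIsometry_mul_diagonal_singVals_mul M
  have hdiag : ∑ i, |M i i| ^ p ≤ ∑ k, singVals M k ^ p := by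
    have h := sum_abs_diag_rpow_le_of_mul_diagonal_mul hp hV hU (singVals M)
      fun k => Real.sqrt_nonneg _
    rwa [← hM] at h
  unfold schattenNorm
  rw [sum_singVals_diagonal_rpow]
  exact Real.rpow_le_rpow (Finset.sum_nonneg fun i _ => by positivity) hdiag (by positivity)
end

section
/- Let q be a minimizer of g(x) = (1/2)∑ᵢ xᵢ²/σᵢ² + ∑ᵢ xᵢ/σᵢ² + α⁻¹‖x‖_p over ℝ^d, where ‖·‖_p is the Euclidean p-norm with 1 ≤ p < ∞, σᵢ > 0, α > 0. Then every coordinate of q satisfies −1 ≤ qᵢ ≤ 0. -/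
/-!
The quadratic-plus-linear part of the objective is separable, and the `p`-norm term only
decreases when a coordinate is moved towards `0`. So each coordinate `qᵢ` of a minimizer minimizes
`t ↦ t² / 2 + t` among all `t` with `|t| ≤ |qᵢ|`. If `qᵢ < -1` the competitor `t = -1` is strictly
better, and if `qᵢ > 0` the competitor `t = 0` is.
-/

open Finset

theorem rpow_sum_abs_rpow_le_of_abs_le {ι : Type*} [Fintype ι] {p : ℝ} (hp : 0 < p)
    {x y : ι → ℝ} (h : ∀ j, |x j| ≤ |y j|) :
    (∑ j, |x j| ^ p) ^ (1 / p) ≤ (∑ j, |y j| ^ p) ^ (1 / p) :=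
  Real.rpow_le_rpow (sum_nonneg fun _ _ => by positivity)
    (sum_le_sum fun j _ => Real.rpow_le_rpow (abs_nonneg _) (h j) hp.le) (by positivity)

theorem sum_apply_update_add_sub {ι α M : Type*} [Fintype ι] [DecidableEq ι] [AddCommGroup M]
    (f : ι → α → M) (q : ι → α) (i : ι) (c : α) :
    ∑ j, f j (Function.update q i c j) = ∑ j, f j (q j) + (f i c - f i (q i)) := by
  simp only [Function.apply_update f, sum_update_of_mem (mem_univ i),
    sum_eq_add_sum_sdiff_singleton_of_mem (mem_univ i) fun j => f j (q j)]
  abel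

theorem apply_le_of_forall_sum_add_le {ι : Type*} [Fintype ι] (f : ι → ℝ → ℝ)
    {R : (ι → ℝ) → ℝ} (hR : ∀ x y, (∀ j, |x j| ≤ |y j|) → R x ≤ R y) {q : ι → ℝ}
    (hq : ∀ x, ∑ j, f j (q j) + R q ≤ ∑ j, f j (x j) + R x) (i : ι) {c : ℝ}
    (hc : |c| ≤ |q i|) : f i (q i) ≤ f i c := by
  classical
  have hR_update : R (Function.update q i c) ≤ R q := by
    refine hR _ _ fun j => ?_
    rcases eq_or_ne j i with rfl | hji
    · simpa using hc
    · simp [hji]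
  have := hq (Function.update q i c)
  rw [sum_apply_update_add_sub] at this
  linarith

theorem neg_one_le_and_nonpos_of_forall_abs_le {t : ℝ}
    (ht : ∀ c, |c| ≤ |t| → t ^ 2 / 2 + t ≤ c ^ 2 / 2 + c) : -1 ≤ t ∧ t ≤ 0 := by
  constructor
  · by_contra! h
    have := ht (-1) (by rw [abs_neg, abs_one, abs_of_neg (by linarith)]; linarith)
    nlinarith
  · by_contra! h
    have := ht 0 (by simp)
    nlinarith

/-- Let `q` be a minimizer of
`g(x) = (1/2)∑ᵢ xᵢ²/σᵢ² + ∑ᵢ xᵢ/σᵢ² + α⁻¹ (∑ᵢ |xᵢ|^p)^(1/p)` over `ℝ^d`,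
with `1 ≤ p < ∞`, `σᵢ > 0`, `α > 0`. Then every coordinate of `q` satisfies
`-1 ≤ qᵢ ≤ 0`. -/
theorem stmt_7 {d : ℕ} (σ : Fin d → ℝ) (hσ : ∀ i, 0 < σ i) (α p : ℝ)
    (hα : 0 < α) (hp : 1 ≤ p) (q : Fin d → ℝ)
    (hq : ∀ x : Fin d → ℝ,
      (1/2) * ∑ i, (q i)^2 / (σ i)^2 + ∑ i, q i / (σ i)^2
          + α⁻¹ * (∑ i, |q i| ^ p) ^ (1/p) ≤
        (1/2) * ∑ i, (x i)^2 / (σ i)^2 + ∑ i, x i / (σ i)^2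
          + α⁻¹ * (∑ i, |x i| ^ p) ^ (1/p)) :
    ∀ i, -1 ≤ q i ∧ q i ≤ 0 := by
  have hsep : ∀ x : Fin d → ℝ, (1/2) * ∑ i, (x i)^2 / (σ i)^2 + ∑ i, x i / (σ i)^2
      = ∑ i, ((x i)^2 / 2 + x i) / (σ i)^2 := fun x => by
    rw [mul_sum, ← sum_add_distrib]
    exact sum_congr rfl fun i _ => by ring
  have hpenalty (x y : Fin d → ℝ) (h : ∀ j, |x j| ≤ |y j|) :
      α⁻¹ * (∑ j, |x j| ^ p) ^ (1/p) ≤ α⁻¹ * (∑ j, |y j| ^ p) ^ (1/p) :=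
    mul_le_mul_of_nonneg_left (rpow_sum_abs_rpow_le_of_abs_le (by linarith) h) (by positivity)
  intro i
  refine neg_one_le_and_nonpos_of_forall_abs_le fun c hc => ?_
  have := apply_le_of_forall_sum_add_le (fun j t => (t^2 / 2 + t) / (σ j)^2) hpenalty
    (fun x => by simpa only [hsep] using hq x) i hc
  exact (div_le_div_iff_of_pos_right (pow_pos (hσ i) 2)).1 this
end
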